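/- arXiv:1305.4610 — 5 statements merged into one kernel-verified Lean document; each statement's English description precedes it below -/
import Mathlib

section
/- Let K ≥ 1 and let α_{ij} ≥ 0 for all i,j ∈ {1,...,K}, and let d_1,...,d_K ∈ ℝ with d_i ≥ 0. Then there exist r_1,...,r_K ≤ 0 such that d_i ≤ α_{ii} + r_i and d_i ≤ α_{ii} + r_i − (α_{ij} + r_j) for all i ≠ j, if and only if d_i ≤ α_{ii} for all i, and for every m ≥ 2 and every sequence of distinct indices i_1,...,i_m (with indices taken cyclically, i_0 = i_m), ∑_{j=1}^m d_{i_j} ≤ ∑_{j=1}^m (α_{i_j i_j} − α_{i_{j-1} i_j}). -/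
/-!
With `w a b = d a - α a a + α a b`, the constraints read `w i j ≤ r i - r j` for `i ≠ j` and
`d i - α i i ≤ r i ≤ 0`: a system of difference constraints. Summing `w` around a cycle telescopes
the `r`'s away, which gives necessity. For sufficiency take `r i` to be the supremum, over simple
paths starting at `i`, of the `w`-weight of the path plus `d - α` at its endpoint. Such values are
nonpositive because closing the path into a cycle only adds some `α ≥ 0`, and prepending `i` to a
simple path from `j` yields either a simple path from `i`, or a cycle through `i` (of nonpositive
weight) followed by a simple path from `i`.
-/

/-- Cyclic predecessor in `Fin m`. -/
def cprev {m : ℕ} (j : Fin m) : Fin m := ⟨(j.1 + m - 1) % m, Nat.mod_lt _ j.pos⟩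

section Cprev

variable {n : ℕ}

theorem cprev_zero : cprev (0 : Fin (n + 1)) = Fin.last n :=
  Fin.ext <| by simp [cprev]

theorem cprev_succ (k : Fin n) : cprev k.succ = k.castSucc :=
  Fin.ext <| by
    simp only [cprev, Fin.val_succ, Fin.val_castSucc]
    rw [show k.1 + 1 + (n + 1) - 1 = k.1 + (n + 1) by omega, Nat.add_mod_right,
      Nat.mod_eq_of_lt (by omega)]

theorem cprev_ne_self (hn : 1 ≤ n) (j : Fin (n + 1)) : cprev j ≠ j := by
  cases j using Fin.cases with
  | zero => rw [cprev_zero]; exact Fin.ext_iff.not.mpr (by simp; omega)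
  | succ k => rw [cprev_succ]; exact Fin.castSucc_lt_succ.ne

theorem sum_comp_cprev {M : Type*} [AddCommMonoid M] (f : Fin (n + 1) → M) :
    ∑ j, f (cprev j) = ∑ j, f j := by
  rw [Fin.sum_univ_succ, cprev_zero, Fin.sum_univ_castSucc f, add_comm]
  simp only [cprev_succ]

end Cprev

section Walk

variable {ι : Type*} (w : ι → ι → ℝ)

def walkWeight : List ι → ℝ
  | a :: b :: t => w a b + walkWeight (b :: t)
  | _ => 0

@[simp] theorem walkWeight_singleton (a : ι) : walkWeight w [a] = 0 := rfl

@[simp] theorem walkWeight_cons_cons (a b : ι) (t : List ι) :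
    walkWeight w (a :: b :: t) = w a b + walkWeight w (b :: t) := rfl

theorem walkWeight_cons (a : ι) {l : List ι} (hl : l ≠ []) :
    walkWeight w (a :: l) = w a (l.head hl) + walkWeight w l := by
  obtain ⟨b, t, rfl⟩ := List.exists_cons_of_ne_nil hl
  rfl

theorem walkWeight_append_cons (x : List ι) (a : ι) (t : List ι) :
    walkWeight w (x ++ a :: t) = walkWeight w (x ++ [a]) + walkWeight w (a :: t) := by
  induction x with
  | nil => simp
  | cons b x ih =>
    rcases x with _ | ⟨b', x⟩
    · simp
    · simp only [List.cons_append, walkWeight_cons_cons] at ih ⊢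
      rw [ih, add_assoc]

theorem walkWeight_append_singleton {x : List ι} (hx : x ≠ []) (a : ι) :
    walkWeight w (x ++ [a]) = walkWeight w x + w (x.getLast hx) a := by
  conv_lhs => rw [← List.dropLast_append_getLast hx, List.append_assoc, List.singleton_append,
    walkWeight_append_cons, List.dropLast_append_getLast hx]
  simp

theorem walkWeight_ofFn {n : ℕ} (f : Fin (n + 1) → ι) :
    walkWeight w (List.ofFn f) = ∑ k : Fin n, w (f k.castSucc) (f k.succ) := by
  induction n with
  | zero => simp
  | succ n ih =>
    rw [List.ofFn_succ, walkWeight_cons w _ (by simp), ih, Fin.sum_univ_succ]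
    simp only [Fin.succ_castSucc, List.head_ofFn]
    rfl

theorem sum_cprev_eq_walkWeight {n : ℕ} (f : Fin (n + 1) → ι) :
    ∑ j, w (f (cprev j)) (f j) = walkWeight w (List.ofFn f ++ [f 0]) := by
  rw [walkWeight_append_singleton w (by simp), List.getLast_ofFn, walkWeight_ofFn,
    Fin.sum_univ_succ, cprev_zero, add_comm]
  simp only [cprev_succ]
  rfl

theorem sum_cprev_nonpos_of_le_sub (r : ι → ℝ) (h : ∀ a b, a ≠ b → w a b ≤ r a - r b) {n : ℕ}
    (hn : 1 ≤ n) {f : Fin (n + 1) → ι} (hf : Function.Injective f) :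
    ∑ j, w (f (cprev j)) (f j) ≤ 0 :=
  calc ∑ j, w (f (cprev j)) (f j)
      ≤ ∑ j, (r (f (cprev j)) - r (f j)) :=
        Finset.sum_le_sum fun j _ => h _ _ (hf.ne (cprev_ne_self hn j))
    _ = 0 := by rw [Finset.sum_sub_distrib, sum_comp_cprev (fun j => r (f j)), sub_self]

def SimpleCyclesNonpos : Prop :=
  ∀ i s, (i :: s).Nodup → s ≠ [] → walkWeight w (i :: s ++ [i]) ≤ 0

variable (c : ι → ℝ)

def pathValue (i : ι) (s : List ι) : ℝ :=
  walkWeight w (i :: s) + c ((i :: s).getLast (List.cons_ne_nil i s))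

@[simp] theorem pathValue_nil (i : ι) : pathValue w c i [] = c i := by
  simp [pathValue]

theorem pathValue_cons (i j : ι) (s : List ι) :
    pathValue w c i (j :: s) = w i j + pathValue w c j s := by
  simp only [pathValue, walkWeight_cons_cons, List.getLast_cons_cons, add_assoc]

theorem pathValue_append_cons (i : ι) (x t : List ι) :
    pathValue w c i (x ++ i :: t) = walkWeight w (i :: x ++ [i]) + pathValue w c i t := by
  have hlast : (i :: (x ++ i :: t)).getLast (List.cons_ne_nil _ _)
      = (i :: t).getLast (List.cons_ne_nil i t) :=
    List.getLast_append_of_ne_nil (l := i :: x) _ (List.cons_ne_nil i t)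
  rw [pathValue, pathValue, hlast, ← List.cons_append, walkWeight_append_cons, add_assoc]

variable {w c}

theorem pathValue_nonpos (hc : ∀ i, c i ≤ 0) (hcw : ∀ i j, c i ≤ w i j)
    (hcycle : SimpleCyclesNonpos w)
    {i : ι} {s : List ι} (hnd : (i :: s).Nodup) : pathValue w c i s ≤ 0 := by
  rcases eq_or_ne s [] with rfl | hs
  · simpa using hc i
  · have hclose := walkWeight_append_singleton w (List.cons_ne_nil i s) i
    have hlast := hcw ((i :: s).getLast (List.cons_ne_nil i s)) i
    have hcycle_le := hcycle i s hnd hs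
    simp only [pathValue]
    linarith

theorem exists_pathValue_ge_cons
    (hcycle : SimpleCyclesNonpos w)
    {i j : ι} (hij : i ≠ j) {s : List ι} (hnd : (j :: s).Nodup) :
    ∃ t, (i :: t).Nodup ∧ w i j + pathValue w c j s ≤ pathValue w c i t := by
  rw [← pathValue_cons]
  by_cases hi : i ∈ j :: s
  · obtain ⟨x, t, hxt⟩ := List.append_of_mem hi
    have hx : x ≠ [] := by
      rintro rfl
      exact hij (List.cons_eq_cons.mp hxt).1.symm
    rw [hxt, List.nodup_middle] at hnd
    refine ⟨t, hnd.sublist ((List.sublist_append_right x t).cons_cons i), ?_⟩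
    rw [hxt, pathValue_append_cons]
    have hcycle_le := hcycle i x (hnd.sublist ((List.sublist_append_left x t).cons_cons i)) hx
    linarith
  · exact ⟨j :: s, List.nodup_cons.mpr ⟨hi, hnd⟩, le_rfl⟩

theorem exists_potential_of_cycle_walkWeight_nonpos (hc : ∀ i, c i ≤ 0)
    (hcw : ∀ i j, c i ≤ w i j)
    (hcycle : SimpleCyclesNonpos w) :
    ∃ r : ι → ℝ, (∀ i, r i ≤ 0) ∧ (∀ i, c i ≤ r i) ∧ ∀ i j, i ≠ j → w i j + r j ≤ r i := by
  set S : ι → Set ℝ := fun i => {v | ∃ s, (i :: s).Nodup ∧ v = pathValue w c i s}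
  have hnil : ∀ i, c i ∈ S i := fun i => ⟨[], List.nodup_singleton i, (pathValue_nil w c i).symm⟩
  have hle : ∀ i, ∀ v ∈ S i, v ≤ 0 := by
    rintro i _ ⟨s, hnd, rfl⟩
    exact pathValue_nonpos hc hcw hcycle hnd
  have hbdd : ∀ i, BddAbove (S i) := fun i => ⟨0, hle i⟩
  refine ⟨fun i => sSup (S i), fun i => csSup_le ⟨_, hnil i⟩ (hle i),
    fun i => le_csSup (hbdd i) (hnil i), fun i j hij => ?_⟩
  rw [← le_sub_iff_add_le']
  refine csSup_le ⟨_, hnil j⟩ ?_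
  rintro _ ⟨s, hnd, rfl⟩
  obtain ⟨t, hnd', hle'⟩ := exists_pathValue_ge_cons (c := c) hcycle hij hnd
  rw [le_sub_iff_add_le']
  exact hle'.trans (le_csSup (hbdd i) ⟨t, hnd', rfl⟩)

end Walk

section TIN

variable {ι : Type*} (α : ι → ι → ℝ) (d : ι → ℝ)

def tinWeight (a b : ι) : ℝ := d a - α a a + α a b

theorem sum_tinWeight_cprev {n : ℕ} (f : Fin (n + 1) → ι) :
    ∑ j, tinWeight α d (f (cprev j)) (f j)
      = ∑ j, d (f j) - ∑ j, (α (f j) (f j) - α (f (cprev j)) (f j)) := by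
  simp only [tinWeight, Finset.sum_add_distrib, Finset.sum_sub_distrib,
    sum_comp_cprev fun j => d (f j), sum_comp_cprev fun j => α (f j) (f j)]
  ring

end TIN

theorem stmt_2_general (K : ℕ) (α : Fin K → Fin K → ℝ)
    (hα : ∀ i j, 0 ≤ α i j) (d : Fin K → ℝ) :
    (∃ r : Fin K → ℝ,
      (∀ i, r i ≤ 0) ∧
      (∀ i, d i ≤ α i i + r i) ∧
      (∀ i j, i ≠ j → d i ≤ α i i + r i - (α i j + r j))) ↔
    ((∀ i, d i ≤ α i i) ∧
      ∀ m : ℕ, 2 ≤ m → ∀ i : Fin m → Fin K, Function.Injective i →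
        ∑ j : Fin m, d (i j) ≤ ∑ j : Fin m, (α (i j) (i j) - α (i (cprev j)) (i j))) := by
  constructor
  · rintro ⟨r, hr0, hdr, hrr⟩
    refine ⟨fun i => (hdr i).trans (by linarith [hr0 i]), fun m hm f hf => ?_⟩
    obtain ⟨n, rfl⟩ : ∃ n, m = n + 1 := ⟨m - 1, by omega⟩
    have hcycle := sum_cprev_nonpos_of_le_sub (tinWeight α d) r
      (fun a b hab => by rw [tinWeight]; linarith [hrr a b hab]) (by omega) hf
    rw [sum_tinWeight_cprev] at hcycle
    linarith
  · rintro ⟨hdiag, hcyc⟩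
    obtain ⟨r, hr0, hdr, hrr⟩ := exists_potential_of_cycle_walkWeight_nonpos
      (w := tinWeight α d) (c := fun i => d i - α i i) (fun i => sub_nonpos.mpr (hdiag i))
      (fun i j => le_add_of_nonneg_right (hα i j)) fun i s hnd hs => by
        have hcycle := hcyc (s.length + 1) (by simpa [Nat.one_le_iff_ne_zero] using hs)
          (i :: s).get (List.nodup_iff_injective_get.mp hnd)
        rwa [← sub_nonpos, ← sum_tinWeight_cprev, sum_cprev_eq_walkWeight, List.ofFn_get] at hcycle
    refine ⟨r, hr0, fun i => by linarith [hdr i], fun i j hij => ?_⟩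
    have hij_le := hrr i j hij
    rw [tinWeight] at hij_le
    linarith

theorem stmt_2 (K : ℕ) (hK : 1 ≤ K) (α : Fin K → Fin K → ℝ)
    (hα : ∀ i j, 0 ≤ α i j) (d : Fin K → ℝ) (hd : ∀ i, 0 ≤ d i) :
    (∃ r : Fin K → ℝ,
      (∀ i, r i ≤ 0) ∧
      (∀ i, d i ≤ α i i + r i) ∧
      (∀ i j, i ≠ j → d i ≤ α i i + r i - (α i j + r j))) ↔
    ((∀ i, d i ≤ α i i) ∧
      ∀ m : ℕ, 2 ≤ m → ∀ i : Fin m → Fin K, Function.Injective i →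
        ∑ j : Fin m, d (i j) ≤ ∑ j : Fin m, (α (i j) (i j) - α (i (cprev j)) (i j))) :=
  stmt_2_general K α hα d
end

section
/- Under the assumption α_{ij} ≥ 0 for all i,j, in the directed graph D on vertices {v_1,...,v_K,u} with lengths l(v_i,v_j)=α_{ii}−d_i−α_{ij}, l(v_i,u)=α_{ii}−d_i, l(u,v_i)=0, if every cycle of the form (u,v_i,u) has nonnegative length and every cycle using only vertices among {v_1,...,v_K} has nonnegative length, then every directed cycle of D has nonnegative length (i.e., cycles of the form (u, v_{i_1}, ..., v_{i_m}, u) with m > 1 impose no additional constraints). -/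
/-! A cycle through the ground node `u` has the form `(u, v_{i_1}, …, v_{i_n}, u)`. Its arcs out of
`u` have length `0`, and its closing arc `(v_{i_n}, u)` is longer than the arc `(v_{i_n}, v_{i_1})`
by `α_{i_n i_1} ≥ 0`. So its length is at least that of the cycle `(v_{i_1}, …, v_{i_n})`, which
is nonnegative when `n ≥ 2`; for `n = 1` it is a cycle `(u, v_i, u)`. -/

/-- Cyclic successor in `Fin m`. -/
def cnext {m : ℕ} (j : Fin m) : Fin m := ⟨(j.1 + 1) % m, Nat.mod_lt _ j.pos⟩

/-- Arc lengths of the directed graph `D` on vertices `{v_1,...,v_K, u}`,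
where `some i` represents `v_i` and `none` represents the ground node `u`. -/
def arcLen {K : ℕ} (α : Fin K → Fin K → ℝ) (d : Fin K → ℝ) :
    Option (Fin K) → Option (Fin K) → ℝ
  | some i, some j => α i i - d i - α i j
  | some i, none => α i i - d i
  | none, _ => 0

lemma cnext_eq_add_one {m : ℕ} [NeZero m] (j : Fin m) : cnext j = j + 1 := by
  apply Fin.ext
  simp [cnext, Fin.add_def]

lemma cnext_castSucc {k : ℕ} (t : Fin k) : cnext t.castSucc = t.succ := by
  apply Fin.ext
  simp [cnext, Nat.mod_eq_of_lt (Nat.succ_lt_succ t.isLt)]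

lemma cnext_last (k : ℕ) : cnext (Fin.last k) = 0 := by
  apply Fin.ext
  simp [cnext]

section CycleSum

variable {V M : Type*} [AddCommMonoid M]

def cycleSum {m : ℕ} (F : V → V → M) (i : Fin m → V) : M :=
  ∑ j, F (i j) (i (cnext j))

lemma cycleSum_rotate {m : ℕ} [NeZero m] (F : V → V → M) (i : Fin m → V) (k : Fin m) :
    cycleSum F (fun j => i (j + k)) = cycleSum F i := by
  refine Fintype.sum_equiv (Equiv.addRight k) _ _ fun j => ?_
  simp only [Equiv.coe_addRight, cnext_eq_add_one, add_right_comm j 1 k]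

lemma cycleSum_eq_pathSum_add {k : ℕ} (F : V → V → M) (g : Fin (k + 1) → V) :
    cycleSum F g = ∑ t : Fin k, F (g t.castSucc) (g t.succ) + F (g (Fin.last k)) (g 0) := by
  simp only [cycleSum, Fin.sum_univ_castSucc, cnext_castSucc, cnext_last]

lemma cycleSum_cons_add {k : ℕ} (F : V → V → M) (u : V) (g : Fin (k + 1) → V) :
    cycleSum F (Fin.cons u g : Fin (k + 2) → V) + F (g (Fin.last k)) (g 0) =
      cycleSum F g + (F u (g 0) + F (g (Fin.last k)) u) := by
  rw [cycleSum_eq_pathSum_add, cycleSum_eq_pathSum_add, Fin.sum_univ_succ]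
  simp only [Fin.castSucc_zero, Fin.cons_zero, Fin.cons_succ, ← Fin.succ_castSucc, ← Fin.succ_last]
  abel

end CycleSum

lemma exists_injective_eq_some_comp {ι β : Type*} {i : ι → Option β} (hi : Function.Injective i)
    (hsome : ∀ j, i j ≠ none) : ∃ f : ι → β, Function.Injective f ∧ i = some ∘ f := by
  have hfs : ∀ j, i j = some ((i j).get (Option.isSome_iff_ne_none.2 (hsome j))) :=
    fun j => (Option.some_get _).symm
  refine ⟨fun j => (i j).get (Option.isSome_iff_ne_none.2 (hsome j)), fun a b hab => hi ?_,
    funext hfs⟩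
  rw [hfs a, hfs b, Option.some_inj]
  exact hab

lemma exists_injective_eq_cons_none {β : Type*} {n : ℕ} {i : Fin (n + 1) → Option β}
    (hi : Function.Injective i) (h0 : i 0 = none) :
    ∃ g : Fin n → β, Function.Injective g ∧ i = Fin.cons none (some ∘ g) := by
  obtain ⟨g, hg, htail⟩ := exists_injective_eq_some_comp (i := Fin.tail i)
    (hi.comp (Fin.succ_injective n)) fun t h => Fin.succ_ne_zero t (hi (h.trans h0.symm))
  exact ⟨g, hg, by rw [← htail, ← h0, Fin.cons_self_tail]⟩

lemma cycleSum_arcLen_cons_none {K k : ℕ} (α : Fin K → Fin K → ℝ) (d : Fin K → ℝ)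
    (g : Fin (k + 1) → Fin K) :
    cycleSum (arcLen α d) (Fin.cons none (some ∘ g) : Fin (k + 2) → Option (Fin K)) =
      cycleSum (arcLen α d) (some ∘ g) + α (g (Fin.last k)) (g 0) := by
  have := cycleSum_cons_add (arcLen α d) none (some ∘ g)
  simp only [Function.comp_apply, arcLen] at this
  linarith

theorem stmt_3_general (K : ℕ) (α : Fin K → Fin K → ℝ)
    (hα : ∀ i j, 0 ≤ α i j) (d : Fin K → ℝ)
    -- every cycle of the form (u, v_i, u) has nonnegative length:
    (h1 : ∀ i : Fin K, 0 ≤ arcLen α d (some i) none + arcLen α d none (some i))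
    -- every cycle using only vertices among {v_1,...,v_K} has nonnegative length:
    (h2 : ∀ m : ℕ, 2 ≤ m → ∀ i : Fin m → Fin K, Function.Injective i →
      0 ≤ ∑ j : Fin m, arcLen α d (some (i j)) (some (i (cnext j)))) :
    -- every directed cycle of D has nonnegative length:
    ∀ m : ℕ, 2 ≤ m → ∀ i : Fin m → Option (Fin K), Function.Injective i →
      0 ≤ ∑ j : Fin m, arcLen α d (i j) (i (cnext j)) := by
  intro m hm i hi
  change 0 ≤ cycleSum (arcLen α d) i
  by_cases hnone : ∃ j₀, i j₀ = none
  · obtain ⟨j₀, hj₀⟩ := hnone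
    obtain ⟨k, rfl⟩ : ∃ k, m = k + 2 := ⟨m - 2, by omega⟩
    rw [← cycleSum_rotate _ _ j₀]
    obtain ⟨g, hg, hcons⟩ := exists_injective_eq_cons_none (i := fun j => i (j + j₀))
      (hi.comp (add_left_injective j₀)) (by simpa using hj₀)
    rw [hcons, cycleSum_arcLen_cons_none]
    rcases k with _ | k
    · simpa [cycleSum_eq_pathSum_add, arcLen] using h1 (g 0)
    · exact add_nonneg (h2 (k + 2) (by omega) g hg) (hα _ _)
  · obtain ⟨f, hf, rfl⟩ := exists_injective_eq_some_comp hi (not_exists.1 hnone)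
    exact h2 m hm f hf

theorem stmt_3 (K : ℕ) (hK : 1 ≤ K) (α : Fin K → Fin K → ℝ)
    (hα : ∀ i j, 0 ≤ α i j) (d : Fin K → ℝ)
    -- every cycle of the form (u, v_i, u) has nonnegative length:
    (h1 : ∀ i : Fin K, 0 ≤ arcLen α d (some i) none + arcLen α d none (some i))
    -- every cycle using only vertices among {v_1,...,v_K} has nonnegative length:
    (h2 : ∀ m : ℕ, 2 ≤ m → ∀ i : Fin m → Fin K, Function.Injective i →
      0 ≤ ∑ j : Fin m, arcLen α d (some (i j)) (some (i (cnext j)))) :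
    -- every directed cycle of D has nonnegative length:
    ∀ m : ℕ, 2 ≤ m → ∀ i : Fin m → Option (Fin K), Function.Injective i →
      0 ≤ ∑ j : Fin m, arcLen α d (i j) (i (cnext j)) :=
  stmt_3_general K α hα d h1 h2
end

section
/- Let P > 1 and α_{ij} ≥ 0. For any cyclic sequence of distinct indices (i_1,...,i_m) with i_0 = i_m: ∑_{j=1}^m log₂(1 + P^{α_{i_j i_{j+1}}} + P^{α_{i_j i_j}} / (1 + P^{α_{i_{j-1} i_j}})) < ∑_{j=1}^m [(α_{i_j i_j} − α_{i_{j-1} i_j}) log₂ P + log₂ 3], provided α_{i_j i_j} ≥ α_{i_{j-1} i_j} + α_{i_j i_{j+1}} for each j. -/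
lemma term_lt (P : ℝ) (hP : 1 < P) (a b d : ℝ) (ha : 0 ≤ a) (hb : 0 ≤ b)
    (hd : b + a ≤ d) :
    Real.logb 2 (1 + P ^ a + P ^ d / (1 + P ^ b)) <
      (d - b) * Real.logb 2 P + Real.logb 2 3 := by
  have hP0 : (0:ℝ) < P := lt_trans one_pos hP
  have hPb : (0:ℝ) < P ^ b := Real.rpow_pos_of_pos hP0 b
  have hPa : (0:ℝ) < P ^ a := Real.rpow_pos_of_pos hP0 a
  have hPd : (0:ℝ) < P ^ d := Real.rpow_pos_of_pos hP0 d
  have hdb : a ≤ d - b := by linarith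
  have hdb0 : (0:ℝ) ≤ d - b := le_trans ha hdb
  have hPdb : (0:ℝ) < P ^ (d - b) := Real.rpow_pos_of_pos hP0 _
  have h1 : (1:ℝ) ≤ P ^ (d - b) := Real.one_le_rpow hP.le hdb0
  have h2 : P ^ a ≤ P ^ (d - b) := Real.rpow_le_rpow_left_iff hP |>.mpr hdb
  have h3 : P ^ d / (1 + P ^ b) < P ^ (d - b) := by
    rw [div_lt_iff₀ (by linarith)]
    have : P ^ (d - b) * P ^ b = P ^ d := by
      rw [← Real.rpow_add hP0]; ring_nf
    nlinarith
  have hlt : 1 + P ^ a + P ^ d / (1 + P ^ b) < 3 * P ^ (d - b) := by linarith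
  have hx : (0:ℝ) < 1 + P ^ a + P ^ d / (1 + P ^ b) := by positivity
  calc Real.logb 2 (1 + P ^ a + P ^ d / (1 + P ^ b))
      < Real.logb 2 (3 * P ^ (d - b)) := Real.logb_lt_logb one_lt_two hx hlt
    _ = (d - b) * Real.logb 2 P + Real.logb 2 3 := by
        rw [Real.logb_mul (by norm_num) (ne_of_gt hPdb)]; unfold Real.logb; rw [Real.log_rpow hP0]; ring

theorem stmt_9 (K : ℕ) (hK : 1 ≤ K) (P : ℝ) (hP : 1 < P)
    (α : Fin K → Fin K → ℝ) (hα : ∀ i j, 0 ≤ α i j)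
    (m : ℕ) (hm : 2 ≤ m) (i : Fin m → Fin K) (hinj : Function.Injective i)
    (hcond : ∀ j : Fin m,
      α (i (cprev j)) (i j) + α (i j) (i (cnext j)) ≤ α (i j) (i j)) :
    ∑ j : Fin m, Real.logb 2
        (1 + P ^ α (i j) (i (cnext j)) +
          P ^ α (i j) (i j) / (1 + P ^ α (i (cprev j)) (i j))) <
      ∑ j : Fin m,
        ((α (i j) (i j) - α (i (cprev j)) (i j)) * Real.logb 2 P +
          Real.logb 2 3) := by
  have hne : (Finset.univ : Finset (Fin m)).Nonempty := by
    have : 0 < m := by omega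
    exact ⟨⟨0, this⟩, Finset.mem_univ _⟩
  refine Finset.sum_lt_sum_of_nonempty hne fun j _ => ?_
  exact term_lt P hP _ _ _ (hα _ _) (hα _ _) (hcond j)
end

section
/- Let P > 1, K ≥ 1, and suppose the exponents r_i ≤ 0 and d_i ≥ 0 satisfy r_i + α_{ii} − max{0, max_{j≠i}(r_j + α_{ij})} = d_i for each i. Then log₂(1 + P^{r_i+α_{ii}} / (1 + ∑_{j≠i} P^{r_j+α_{ij}})) ≥ d_i log₂ P − log₂ K for every i. -/
/-!
Bound every interfering power `P ^ (r j + α i j)`, and the noise power `1 = P ^ 0`, by `P ^ M`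
with `M = max 0 (max_{j ≠ i} (r j + α i j))`. The noise-plus-interference power is then at most
`K * P ^ M`, so the signal-to-interference-plus-noise ratio is at least `P ^ (d i) / K`, and the
rate `log₂ (1 + SINR)` exceeds `log₂ SINR ≥ d i * log₂ P - log₂ K`.
-/

open Finset Real

lemma le_max_zero_iSup_ne {ι : Type*} [Finite ι] (b : ι → ℝ) {i j : ι} (hj : j ≠ i) :
    b j ≤ max 0 (⨆ k : {k : ι // k ≠ i}, b k.1) :=
  (le_ciSup (Set.finite_range fun k : {k : ι // k ≠ i} => b k.1).bddAbove ⟨j, hj⟩).trans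
    (le_max_right _ _)

lemma one_add_sum_rpow_le_card_add_one_mul {ι : Type*} {P M : ℝ} (hP : 1 ≤ P) (hM : 0 ≤ M)
    (s : Finset ι) (b : ι → ℝ) (hb : ∀ j ∈ s, b j ≤ M) :
    1 + ∑ j ∈ s, P ^ b j ≤ (#s + 1) * P ^ M := by
  have hsum : ∑ j ∈ s, P ^ b j ≤ #s * P ^ M := by
    simpa [nsmul_eq_mul] using
      sum_le_card_nsmul s _ _ fun j hj => rpow_le_rpow_of_exponent_le hP (hb j hj)
  have hone : 1 ≤ P ^ M := one_le_rpow hP hM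
  linarith

lemma one_add_sum_erase_rpow_le {ι : Type*} [Fintype ι] [DecidableEq ι] {P : ℝ} (hP : 1 ≤ P)
    (b : ι → ℝ) (i : ι) :
    1 + ∑ j ∈ univ.erase i, P ^ b j ≤
      Fintype.card ι * P ^ max 0 (⨆ j : {j : ι // j ≠ i}, b j.1) := by
  have h := one_add_sum_rpow_le_card_add_one_mul hP (le_max_left _ _) (univ.erase i) b
    fun j hj => le_max_zero_iSup_ne b (ne_of_mem_erase hj)
  rwa [← Nat.cast_add_one, card_erase_add_one (mem_univ i), card_univ] at h

lemma logb_rpow_div_mul_rpow {b P K : ℝ} (hP : 0 < P) (hK : 0 < K) (x M : ℝ) :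
    logb b (P ^ x / (K * P ^ M)) = (x - M) * logb b P - logb b K := by
  rw [logb_div (rpow_pos_of_pos hP x).ne' (by positivity), logb_mul hK.ne' (by positivity),
    logb_rpow_eq_mul_logb_of_pos hP, logb_rpow_eq_mul_logb_of_pos hP]
  ring

lemma logb_div_le_logb_one_add_div {b x D C : ℝ} (hb : 1 < b) (hx : 0 < x) (hD : 0 < D)
    (hDC : D ≤ C) : logb b (x / C) ≤ logb b (1 + x / D) := by
  have hxD : x / C ≤ x / D := div_le_div_of_nonneg_left hx.le hD hDC
  exact logb_le_logb_of_le hb (div_pos hx (hD.trans_le hDC)) (by linarith)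

theorem stmt_10_general (K : ℕ) (P : ℝ) (hP : 1 < P)
    (α : Fin K → Fin K → ℝ)
    (r : Fin K → ℝ) (d : Fin K → ℝ)
    (hach : ∀ i, r i + α i i -
        max 0 (⨆ j : {j : Fin K // j ≠ i}, (r j.1 + α i j.1)) = d i) :
    ∀ i, d i * Real.logb 2 P - Real.logb 2 K ≤
      Real.logb 2
        (1 + P ^ (r i + α i i) /
          (1 + ∑ j ∈ Finset.univ.erase i, P ^ (r j + α i j))) := by
  intro i
  have hP0 : 0 < P := one_pos.trans hP
  have hK : (0 : ℝ) < K := by exact_mod_cast i.pos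
  have hden := one_add_sum_erase_rpow_le hP.le (fun j => r j + α i j) i
  rw [Fintype.card_fin] at hden
  rw [← hach i, ← logb_rpow_div_mul_rpow hP0 hK]
  exact logb_div_le_logb_one_add_div one_lt_two (rpow_pos_of_pos hP0 _)
    (add_pos_of_pos_of_nonneg one_pos (sum_nonneg fun j _ => (rpow_pos_of_pos hP0 _).le)) hden

theorem stmt_10 (K : ℕ) (hK : 1 ≤ K) (P : ℝ) (hP : 1 < P)
    (α : Fin K → Fin K → ℝ) (hα : ∀ i j, 0 ≤ α i j)
    (r : Fin K → ℝ) (hr : ∀ i, r i ≤ 0) (d : Fin K → ℝ) (hd : ∀ i, 0 ≤ d i)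
    (hach : ∀ i, r i + α i i -
        max 0 (⨆ j : {j : Fin K // j ≠ i}, (r j.1 + α i j.1)) = d i) :
    ∀ i, d i * Real.logb 2 P - Real.logb 2 K ≤
      Real.logb 2
        (1 + P ^ (r i + α i i) /
          (1 + ∑ j ∈ Finset.univ.erase i, P ^ (r j + α i j))) :=
  stmt_10_general K P hP α r d hach
end

section
/- Suppose α_{ij} ≥ 0 and the TIN-optimality condition α_{ii} ≥ max_{j≠i} α_{ji} + max_{k≠i} α_{ik} holds for all i. If (d_1,...,d_K) lies in the polyhedral TIN region (0 ≤ d_i ≤ α_{ii} and all cycle bounds hold), then there exist r_1,...,r_K ≤ 0 achieving exactly d_i = α_{ii} + r_i − max{0, max_{j≠i}(α_{ij} + r_j)} for all i; in particular max{0, α_{ii} + r_i − max{0, max_{j≠i}(α_{ij}+r_j)}} = α_{ii} + r_i − max{0, max_{j≠i}(α_{ij}+r_j)}, so the polyhedral relaxation is tight and the TIN region equals the polyhedral TIN region. -/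
/-- The TIN-optimality condition. -/
noncomputable def TINopt (K : ℕ) (α : Fin K → Fin K → ℝ) : Prop :=
  ∀ i, (⨆ j : {j : Fin K // j ≠ i}, α j.1 i) + (⨆ k : {k : Fin K // k ≠ i}, α i k.1)
    ≤ α i i

namespace PolyhedralTIN

@[simp] lemma cprev_zero (n : ℕ) : cprev (0 : Fin (n + 1)) = Fin.last n := by
  ext; simp [cprev]

@[simp] lemma cprev_succ {n : ℕ} (k : Fin n) : cprev k.succ = k.castSucc := by
  ext
  simp only [cprev, Fin.val_succ, Fin.val_castSucc]
  rw [show k.1 + 1 + (n + 1) - 1 = k.1 + (n + 1) by omega, Nat.add_mod_right,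
    Nat.mod_eq_of_lt (by omega)]

lemma sum_apply_cprev {M : Type*} [AddCommMonoid M] {n : ℕ} (g : Fin (n + 1) → Fin (n + 1) → M) :
    ∑ j, g (cprev j) j = g (Fin.last n) 0 + ∑ k : Fin n, g k.castSucc k.succ := by
  simp [Fin.sum_univ_succ]

variable {ι : Type*} (α : ι → ι → ℝ) (d : ι → ℝ)

def CycleBound : Prop :=
  ∀ m : ℕ, 2 ≤ m → ∀ i : Fin m → ι, Function.Injective i →
    ∑ j : Fin m, d (i j) ≤ ∑ j : Fin m, (α (i j) (i j) - α (i (cprev j)) (i j))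

def pathValue : List ι → ℝ
  | [] => 0
  | [a] => d a - α a a
  | a :: b :: t => d a - α a a + α a b + pathValue (b :: t)

@[simp] lemma pathValue_nil : pathValue α d [] = 0 := rfl

@[simp] lemma pathValue_singleton (a : ι) : pathValue α d [a] = d a - α a a := rfl

@[simp] lemma pathValue_cons_cons (a b : ι) (t : List ι) :
    pathValue α d (a :: b :: t) = d a - α a a + α a b + pathValue α d (b :: t) := rfl

lemma pathValue_append : ∀ (A : List ι) (hA : A ≠ []) (b : ι) (B : List ι),
    pathValue α d (A ++ b :: B) = pathValue α d A + α (A.getLast hA) b + pathValue α d (b :: B)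
  | [a], _, b, B => by simp
  | a :: a' :: A, _, b, B => by
    rw [List.cons_append, List.cons_append, pathValue_cons_cons, ← List.cons_append,
      pathValue_append (a' :: A) (List.cons_ne_nil _ _) b B, pathValue_cons_cons,
      List.getLast_cons_cons]
    ring

lemma pathValue_ofFn : ∀ {n : ℕ} (f : Fin (n + 1) → ι),
    pathValue α d (List.ofFn f) =
      ∑ j, (d (f j) - α (f j) (f j)) + ∑ k : Fin n, α (f k.castSucc) (f k.succ)
  | 0, f => by simp
  | n + 1, f => by
    rw [List.ofFn_succ, List.ofFn_succ, pathValue_cons_cons,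
      ← List.ofFn_succ (f := fun i : Fin (n + 1) => f i.succ), pathValue_ofFn,
      Fin.sum_univ_succ (f := fun j => d (f j) - α (f j) (f j)),
      Fin.sum_univ_succ (f := fun k : Fin (n + 1) => α (f k.castSucc) (f k.succ))]
    simp only [Fin.succ_zero_eq_one, Fin.castSucc_zero, Fin.succ_castSucc]
    ring

lemma pathValue_add_closingEdge_nonpos (hcyc : CycleBound α d) {a : ι} {l : List ι}
    (hl : (a :: l).Nodup) (hne : l ≠ []) : pathValue α d (a :: l) + α (l.getLast hne) a ≤ 0 := by
  obtain ⟨b, t, rfl⟩ := List.exists_cons_of_ne_nil hne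
  set f : Fin (t.length + 2) → ι := (a :: b :: t).get
  have h := hcyc _ (by omega) f (List.nodup_iff_injective_get.mp hl)
  rw [Finset.sum_sub_distrib, sum_apply_cprev fun p q => α (f p) (f q)] at h
  have hpath : pathValue α d (a :: b :: t) = pathValue α d (List.ofFn f) :=
    congrArg _ (List.ofFn_get _).symm
  have hlast : f (Fin.last _) = (b :: t).getLast hne := by
    simp [f, List.getLast_eq_getElem]
  have hfirst : f 0 = a := rfl
  rw [hpath, pathValue_ofFn, ← hlast, ← hfirst, Finset.sum_sub_distrib]
  linarith

lemma pathValue_nonpos (hα : ∀ i j, 0 ≤ α i j) (hd : ∀ i, d i ≤ α i i) (hcyc : CycleBound α d)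
    {l : List ι} (hl : l.Nodup) : pathValue α d l ≤ 0 := by
  match l, hl with
  | [], _ => rfl
  | [a], _ => simpa using hd a
  | a :: b :: t, hl =>
    linarith [pathValue_add_closingEdge_nonpos α d hcyc hl (List.cons_ne_nil b t),
      hα ((b :: t).getLast (List.cons_ne_nil b t)) a]

-- `r` of the header; the empty tail `t = []` makes the supremum nonempty.
noncomputable def potential (i : ι) : ℝ :=
  ⨆ t : {t : List ι // (i :: t).Nodup}, pathValue α d (i :: t.1)

instance (i : ι) : Nonempty {t : List ι // (i :: t).Nodup} := ⟨⟨[], List.nodup_singleton i⟩⟩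

section potential

variable {α d}

lemma pathValue_le_potential (hP : ∀ l : List ι, l.Nodup → pathValue α d l ≤ 0) {i : ι}
    {t : List ι} (ht : (i :: t).Nodup) :
    pathValue α d (i :: t) ≤ potential α d i :=
  le_ciSup (f := fun t : {t : List ι // (i :: t).Nodup} => pathValue α d (i :: t.1))
    ⟨0, Set.forall_mem_range.mpr fun t => hP _ t.2⟩ ⟨t, ht⟩

lemma potential_nonpos (hP : ∀ l : List ι, l.Nodup → pathValue α d l ≤ 0) (i : ι) :
    potential α d i ≤ 0 :=
  ciSup_le fun t => hP _ t.2

lemma sub_le_potential (hP : ∀ l : List ι, l.Nodup → pathValue α d l ≤ 0) (i : ι) :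
    d i - α i i ≤ potential α d i := by
  simpa using pathValue_le_potential hP (List.nodup_singleton i)

lemma pathValue_cons_le_potential (hP : ∀ l : List ι, l.Nodup → pathValue α d l ≤ 0)
    (hcyc : CycleBound α d) {i j : ι} (hij : i ≠ j) {t : List ι}
    (ht : (j :: t).Nodup) : pathValue α d (i :: j :: t) ≤ potential α d i := by
  by_cases hi : i ∈ j :: t
  · obtain ⟨Q, S, hQS⟩ := List.append_of_mem hi
    have hQ : Q ≠ [] := by rintro rfl; exact hij (List.cons.inj hQS).1.symm
    rw [hQS] at ht ⊢
    have hiQ : (i :: Q).Nodup := by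
      refine List.nodup_cons.mpr ⟨fun h => ?_, ht.sublist (List.sublist_append_left _ _)⟩
      exact (List.nodup_append.mp ht).2.2 i h i List.mem_cons_self rfl
    rw [← List.cons_append, pathValue_append α d (i :: Q) (List.cons_ne_nil i Q),
      List.getLast_cons hQ]
    linarith [pathValue_add_closingEdge_nonpos α d hcyc hiQ hQ,
      pathValue_le_potential hP (ht.sublist (List.sublist_append_right Q _))]
  · exact pathValue_le_potential hP (List.nodup_cons.mpr ⟨hi, ht⟩)

lemma add_potential_le_potential (hP : ∀ l : List ι, l.Nodup → pathValue α d l ≤ 0)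
    (hcyc : CycleBound α d) {i j : ι} (hij : i ≠ j) :
    d i - α i i + α i j + potential α d j ≤ potential α d i := by
  have : potential α d j ≤ potential α d i - (d i - α i i + α i j) := ciSup_le fun t => by
    linarith [pathValue_cons_le_potential hP hcyc hij t.2, pathValue_cons_cons α d i j t.1]
  linarith

lemma potential_le [Finite ι] (hP : ∀ l : List ι, l.Nodup → pathValue α d l ≤ 0) (i : ι) :
    potential α d i ≤
      d i - α i i + max 0 (⨆ j : {j : ι // j ≠ i}, (α i j.1 + potential α d j.1)) := by
  set S := ⨆ j : {j : ι // j ≠ i}, (α i j.1 + potential α d j.1)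
  refine ciSup_le fun ⟨t, ht⟩ => ?_
  match t, ht with
  | [], _ => simp
  | b :: s, ht =>
    have hbi : b ≠ i := fun h => (List.nodup_cons.mp ht).1 (h ▸ List.mem_cons_self)
    have hb : α i b + potential α d b ≤ S :=
      le_ciSup (f := fun j : {j : ι // j ≠ i} => α i j.1 + potential α d j.1)
        (Set.finite_range _).bddAbove ⟨b, hbi⟩
    linarith [pathValue_cons_cons α d i b s, le_max_right 0 S,
      pathValue_le_potential hP ht.of_cons]

lemma potential_eq [Finite ι] (hP : ∀ l : List ι, l.Nodup → pathValue α d l ≤ 0)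
    (hcyc : CycleBound α d) (i : ι) : potential α d i =
      d i - α i i + max 0 (⨆ j : {j : ι // j ≠ i}, (α i j.1 + potential α d j.1)) := by
  refine le_antisymm (potential_le hP i) ?_
  have hS : (⨆ j : {j : ι // j ≠ i}, (α i j.1 + potential α d j.1)) ≤
      potential α d i - (d i - α i i) :=
    Real.iSup_le (fun j => by linarith [add_potential_le_potential hP hcyc j.2.symm])
      (by linarith [sub_le_potential hP i])
  linarith [max_le (sub_nonneg.mpr (sub_le_potential hP i)) hS]

end potential

end PolyhedralTIN

theorem stmt_18_general (K : ℕ) (α : Fin K → Fin K → ℝ)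
    (hα : ∀ i j, 0 ≤ α i j)
    (d : Fin K → ℝ) (hd : ∀ i, 0 ≤ d i ∧ d i ≤ α i i)
    (hcyc : ∀ m : ℕ, 2 ≤ m → ∀ i : Fin m → Fin K, Function.Injective i →
      ∑ j : Fin m, d (i j) ≤ ∑ j : Fin m, (α (i j) (i j) - α (i (cprev j)) (i j))) :
    ∃ r : Fin K → ℝ, (∀ i, r i ≤ 0) ∧
      ∀ i, d i = α i i + r i -
          max 0 (⨆ j : {j : Fin K // j ≠ i}, (α i j.1 + r j.1)) ∧
        max 0 (α i i + r i - max 0 (⨆ j : {j : Fin K // j ≠ i}, (α i j.1 + r j.1)))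
          = α i i + r i - max 0 (⨆ j : {j : Fin K // j ≠ i}, (α i j.1 + r j.1)) := by
  have hP : ∀ l : List (Fin K), l.Nodup → PolyhedralTIN.pathValue α d l ≤ 0 :=
    fun _ hl => PolyhedralTIN.pathValue_nonpos α d hα (fun i => (hd i).2) hcyc hl
  refine ⟨PolyhedralTIN.potential α d, PolyhedralTIN.potential_nonpos hP, fun i => ?_⟩
  have hi := PolyhedralTIN.potential_eq hP hcyc i
  have hdi : d i = α i i + PolyhedralTIN.potential α d i -
      max 0 (⨆ j : {j : Fin K // j ≠ i}, (α i j.1 + PolyhedralTIN.potential α d j.1)) := by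
    linarith
  exact ⟨hdi, hdi ▸ max_eq_right (hd i).1⟩

theorem stmt_18 (K : ℕ) (hK : 1 ≤ K) (α : Fin K → Fin K → ℝ)
    (hα : ∀ i j, 0 ≤ α i j) (hcond : TINopt K α)
    (d : Fin K → ℝ) (hd : ∀ i, 0 ≤ d i ∧ d i ≤ α i i)
    (hcyc : ∀ m : ℕ, 2 ≤ m → ∀ i : Fin m → Fin K, Function.Injective i →
      ∑ j : Fin m, d (i j) ≤ ∑ j : Fin m, (α (i j) (i j) - α (i (cprev j)) (i j))) :
    ∃ r : Fin K → ℝ, (∀ i, r i ≤ 0) ∧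
      ∀ i, d i = α i i + r i -
          max 0 (⨆ j : {j : Fin K // j ≠ i}, (α i j.1 + r j.1)) ∧
        max 0 (α i i + r i - max 0 (⨆ j : {j : Fin K // j ≠ i}, (α i j.1 + r j.1)))
          = α i i + r i - max 0 (⨆ j : {j : Fin K // j ≠ i}, (α i j.1 + r j.1)) :=
  stmt_18_general K α hα d hd hcyc
end
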